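/- arXiv:math/0305322 — 3 statements merged into one kernel-verified Lean document; each statement's English description precedes it below -/
import Mathlib

section
/- If a, b, x are real n-tuples with a ≠ 0, ∑ aᵢxᵢ = 0, and ∑ bᵢxᵢ = 1, then ∑ xᵢ² ≥ (∑ aᵢ²) / (∑ aᵢ² · ∑ bᵢ² − (∑ aᵢbᵢ)²). -/
theorem ostrowski_ineq (n : ℕ) (a b x : Fin n → ℝ) (ha : a ≠ 0)
    (h1 : ∑ i, a i * x i = 0) (h2 : ∑ i, b i * x i = 1) :
    ∑ i, (x i) ^ 2 ≥
      (∑ i, (a i) ^ 2) /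
        ((∑ i, (a i) ^ 2) * (∑ i, (b i) ^ 2) - (∑ i, a i * b i) ^ 2) := by
  set A := ∑ i, (a i) ^ 2 with hA
  set B := ∑ i, (b i) ^ 2 with hB
  set C := ∑ i, a i * b i with hC
  have hApos : 0 < A := by
    rw [hA]
    apply Finset.sum_pos' (fun i _ => sq_nonneg _)
    obtain ⟨i, hi⟩ := Function.ne_iff.mp ha
    exact ⟨i, Finset.mem_univ i, by simpa using sq_pos_of_ne_zero hi⟩
  set u : Fin n → ℝ := fun i => A * b i - C * a i with hu
  have hux : ∑ i, u i * x i = A := by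
    simp only [hu, sub_mul, mul_assoc]
    rw [Finset.sum_sub_distrib, ← Finset.mul_sum, ← Finset.mul_sum, h1, h2]
    ring
  have huu : ∑ i, (u i) ^ 2 = A * (A * B - C ^ 2) := by
    simp only [hu, sub_sq, mul_pow]
    rw [Finset.sum_add_distrib, Finset.sum_sub_distrib, ← Finset.mul_sum, ← Finset.mul_sum]
    have : ∑ i, 2 * (A * b i) * (C * a i) = 2 * A * C * ∑ i, a i * b i := by
      rw [Finset.mul_sum]; apply Finset.sum_congr rfl; intro i _; ring
    rw [this, ← hB, ← hA, ← hC]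
    ring
  have cs := Finset.sum_mul_sq_le_sq_mul_sq Finset.univ u x
  rw [hux, huu] at cs
  have hx : 0 ≤ ∑ i, (x i) ^ 2 := Finset.sum_nonneg fun i _ => sq_nonneg _
  have key : A ≤ (A * B - C ^ 2) * ∑ i, (x i) ^ 2 := by
    nlinarith
  have hD : 0 < A * B - C ^ 2 := by nlinarith
  rw [ge_iff_le, div_le_iff₀ hD]
  linarith [key]
end

section
/- Equality holds in the Ostrowski inequality ∑ xᵢ² ≥ (∑ aᵢ²)/(∑ aᵢ² ∑ bᵢ² − (∑ aᵢbᵢ)²) (under ∑ aᵢxᵢ = 0 and ∑ bᵢxᵢ = 1) if and only if x_k = (b_k ∑ aᵢ² − a_k ∑ aᵢbᵢ)/(∑ aᵢ² ∑ bᵢ² − (∑ aᵢbᵢ)²) for all k. -/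
theorem ostrowski_eq_iff (n : ℕ) (a b x : Fin n → ℝ) (ha : a ≠ 0)
    (h1 : ∑ i, a i * x i = 0) (h2 : ∑ i, b i * x i = 1) :
    (∑ i, (x i) ^ 2 =
      (∑ i, (a i) ^ 2) /
        ((∑ i, (a i) ^ 2) * (∑ i, (b i) ^ 2) - (∑ i, a i * b i) ^ 2)) ↔
    ∀ k, x k =
      (b k * (∑ i, (a i) ^ 2) - a k * (∑ i, a i * b i)) /
        ((∑ i, (a i) ^ 2) * (∑ i, (b i) ^ 2) - (∑ i, a i * b i) ^ 2) := by
  set A := ∑ i, (a i) ^ 2 with hAdef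
  set B := ∑ i, (b i) ^ 2 with hBdef
  set C := ∑ i, a i * b i with hCdef
  have hA : 0 < A := by
    obtain ⟨j, hj⟩ := Function.ne_iff.mp ha
    exact Finset.sum_pos' (fun i _ => sq_nonneg _)
      ⟨j, Finset.mem_univ j, (sq_nonneg (a j)).lt_of_ne (Ne.symm (pow_ne_zero 2 hj))⟩
  have hAne : A ≠ 0 := ne_of_gt hA
  have key : ∀ t : ℝ, ∑ i, (b i - t * a i) ^ 2 = B - 2 * t * C + t ^ 2 * A := by
    intro t
    have h : ∀ i : Fin n, (b i - t * a i) ^ 2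
        = (b i) ^ 2 - 2 * t * (a i * b i) + t ^ 2 * (a i) ^ 2 := fun i => by ring
    rw [Finset.sum_congr rfl fun i _ => h i, Finset.sum_add_distrib,
      Finset.sum_sub_distrib, ← Finset.mul_sum, ← Finset.mul_sum]
  have hDnn : 0 ≤ A * B - C ^ 2 := by
    have h0 : 0 ≤ ∑ i, (b i - (C / A) * a i) ^ 2 :=
      Finset.sum_nonneg fun i _ => sq_nonneg _
    rw [key] at h0
    have heq : A * B - C ^ 2 = (B - 2 * (C / A) * C + (C / A) ^ 2 * A) * A := by
      field_simp; ring
    rw [heq]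
    exact mul_nonneg h0 hA.le
  have hD : 0 < A * B - C ^ 2 := by
    rcases hDnn.lt_or_eq with h | h
    · exact h
    · exfalso
      have hsum : ∑ i, (b i - (C / A) * a i) ^ 2 = 0 := by
        rw [key]
        have heq : B - 2 * (C / A) * C + (C / A) ^ 2 * A = (A * B - C ^ 2) / A := by
          field_simp; ring
        rw [heq, ← h, zero_div]
      have heach := (Finset.sum_eq_zero_iff_of_nonneg
        (fun i _ => sq_nonneg ((b i - (C / A) * a i)))).mp hsum
      have hb : ∀ i, b i = (C / A) * a i := by
        intro i
        have hk := heach i (Finset.mem_univ i)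
        have := sub_eq_zero.mp (sq_eq_zero_iff.mp hk)
        linarith
      have : (1 : ℝ) = 0 := by
        rw [← h2]
        calc ∑ i, b i * x i = ∑ i, (C / A) * (a i * x i) := by
              refine Finset.sum_congr rfl fun i _ => ?_
              rw [hb i]; ring
          _ = (C / A) * ∑ i, a i * x i := by rw [← Finset.mul_sum]
          _ = 0 := by rw [h1, mul_zero]
      norm_num at this
  set D := A * B - C ^ 2 with hDdef
  have hDne : D ≠ 0 := ne_of_gt hD
  set y : Fin n → ℝ := fun i => (b i * A - a i * C) / D with hydef
  have hxy : ∑ i, x i * y i = A / D := by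
    have h : ∀ i : Fin n, x i * y i
        = (A * (b i * x i) - C * (a i * x i)) / D := fun i => by
      simp only [hydef]; ring
    rw [Finset.sum_congr rfl fun i _ => h i, ← Finset.sum_div,
      Finset.sum_sub_distrib, ← Finset.mul_sum, ← Finset.mul_sum, h1, h2]
    ring
  have hyy : ∑ i, (y i) ^ 2 = A / D := by
    have h : ∀ i : Fin n, (y i) ^ 2
        = (A ^ 2 * (b i) ^ 2 - (2 * A * C) * (a i * b i) + C ^ 2 * (a i) ^ 2) / D ^ 2 := by
      intro i
      simp only [hydef]
      rw [div_pow]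
      congr 1
      ring
    rw [Finset.sum_congr rfl fun i _ => h i, ← Finset.sum_div,
      Finset.sum_add_distrib, Finset.sum_sub_distrib, ← Finset.mul_sum,
      ← Finset.mul_sum, ← Finset.mul_sum]
    have hnum : A ^ 2 * B - 2 * A * C * C + C ^ 2 * A = A * D := by
      rw [hDdef]; ring
    rw [hnum, pow_two, ← div_div, mul_div_assoc, div_self hDne, mul_one]
  have hdiff : ∑ i, (x i - y i) ^ 2 = (∑ i, (x i) ^ 2) - A / D := by
    have h : ∀ i : Fin n, (x i - y i) ^ 2
        = (x i) ^ 2 - 2 * (x i * y i) + (y i) ^ 2 := fun i => by ring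
    rw [Finset.sum_congr rfl fun i _ => h i, Finset.sum_add_distrib,
      Finset.sum_sub_distrib, ← Finset.mul_sum, hxy, hyy]
    ring
  constructor
  · intro h k
    have h0 : ∑ i, (x i - y i) ^ 2 = 0 := by rw [hdiff, h]; ring
    have hk := (Finset.sum_eq_zero_iff_of_nonneg
      (fun i _ => sq_nonneg (x i - y i))).mp h0 k (Finset.mem_univ k)
    have : x k - y k = 0 := by
      have := sq_eq_zero_iff.mp hk
      exact this
    have hxk : x k = y k := by linarith
    exact hxk.trans rfl
  · intro h
    have hx : ∀ i : Fin n, x i = y i := fun i => (h i).trans rfl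
    rw [Finset.sum_congr rfl fun i _ => by rw [hx i]]
    exact hyy
end

section
/- In a complex inner product space, for any vectors z, d, c with c ≠ 0: (‖z‖²‖c‖² − |⟨z, c⟩|²)(‖d‖²‖c‖² − |⟨d, c⟩|²) ≥ |⟨z, d⟩‖c‖² − ⟨z, c⟩⟨c, d⟩|². -/
open scoped InnerProductSpace RealInnerProductSpace ComplexInnerProductSpace

/-!
Cauchy–Schwarz applied to the components of `z` and `d` orthogonal to `c`. Scaled by `‖c‖²` to
avoid division, their inner product is `‖c‖²` times the quantity inside the norm on the right and
their squared norms are `‖c‖²` times the two factors on the left, so the claim follows after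
cancelling `‖c‖⁴`; for `c = 0` both sides vanish.
-/

section

variable {𝕜 E : Type*} [RCLike 𝕜] [NormedAddCommGroup E] [InnerProductSpace 𝕜 E]

variable (𝕜) in
def scaledRejection (c x : E) : E :=
  ((‖c‖ : 𝕜) ^ 2) • x - ⟪c, x⟫_𝕜 • c

theorem inner_scaledRejection (c x y : E) :
    ⟪scaledRejection 𝕜 c x, scaledRejection 𝕜 c y⟫_𝕜 =
      (‖c‖ : 𝕜) ^ 2 * (⟪x, y⟫_𝕜 * (‖c‖ : 𝕜) ^ 2 - ⟪x, c⟫_𝕜 * ⟪c, y⟫_𝕜) := by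
  simp only [scaledRejection, inner_sub_left, inner_sub_right, inner_smul_left, inner_smul_right,
    inner_self_eq_norm_sq_to_K, inner_conj_symm, map_pow, RCLike.conj_ofReal]
  ring

theorem norm_sq_scaledRejection (c x : E) :
    ‖scaledRejection 𝕜 c x‖ ^ 2 = ‖c‖ ^ 2 * (‖x‖ ^ 2 * ‖c‖ ^ 2 - ‖⟪x, c⟫_𝕜‖ ^ 2) := by
  have h := congrArg RCLike.re (inner_scaledRejection (𝕜 := 𝕜) c x x)
  rw [← norm_sq_eq_re_inner] at h
  rw [h, inner_self_eq_norm_sq_to_K, ← inner_conj_symm c x, RCLike.mul_conj]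
  simp only [← RCLike.ofReal_pow, ← RCLike.ofReal_mul, ← RCLike.ofReal_sub, RCLike.ofReal_re]

theorem sq_mul_norm_sq_le_gram (z d c : E) :
    (‖c‖ ^ 2) ^ 2 * ‖⟪z, d⟫_𝕜 * (‖c‖ : 𝕜) ^ 2 - ⟪z, c⟫_𝕜 * ⟪c, d⟫_𝕜‖ ^ 2 ≤
      (‖c‖ ^ 2) ^ 2 *
        ((‖z‖ ^ 2 * ‖c‖ ^ 2 - ‖⟪z, c⟫_𝕜‖ ^ 2) * (‖d‖ ^ 2 * ‖c‖ ^ 2 - ‖⟪d, c⟫_𝕜‖ ^ 2)) := by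
  calc (‖c‖ ^ 2) ^ 2 * ‖⟪z, d⟫_𝕜 * (‖c‖ : 𝕜) ^ 2 - ⟪z, c⟫_𝕜 * ⟪c, d⟫_𝕜‖ ^ 2
      = ‖⟪scaledRejection 𝕜 c z, scaledRejection 𝕜 c d⟫_𝕜‖ ^ 2 := by
        rw [inner_scaledRejection, norm_mul, mul_pow]; simp
    _ ≤ ‖scaledRejection 𝕜 c z‖ ^ 2 * ‖scaledRejection 𝕜 c d‖ ^ 2 := by
        rw [← mul_pow]; gcongr; exact norm_inner_le_norm _ _
    _ = _ := by rw [norm_sq_scaledRejection, norm_sq_scaledRejection]; ring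

end

theorem schwarz_proj_complex_general {H : Type*} [NormedAddCommGroup H] [InnerProductSpace ℂ H]
    (z d c : H) :
    (‖z‖ ^ 2 * ‖c‖ ^ 2 - ‖⟪z, c⟫_ℂ‖ ^ 2) * (‖d‖ ^ 2 * ‖c‖ ^ 2 - ‖⟪d, c⟫_ℂ‖ ^ 2) ≥
      ‖⟪z, d⟫_ℂ * (‖c‖ ^ 2 : ℂ) - ⟪z, c⟫_ℂ * ⟪c, d⟫_ℂ‖ ^ 2 := by
  rcases eq_or_ne c 0 with rfl | hc
  · simp
  exact le_of_mul_le_mul_left (sq_mul_norm_sq_le_gram z d c) (by positivity)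

theorem schwarz_proj_complex {H : Type*} [NormedAddCommGroup H] [InnerProductSpace ℂ H]
    (z d c : H) (hc : c ≠ 0) :
    (‖z‖ ^ 2 * ‖c‖ ^ 2 - ‖⟪z, c⟫_ℂ‖ ^ 2) * (‖d‖ ^ 2 * ‖c‖ ^ 2 - ‖⟪d, c⟫_ℂ‖ ^ 2) ≥
      ‖⟪z, d⟫_ℂ * (‖c‖ ^ 2 : ℂ) - ⟪z, c⟫_ℂ * ⟪c, d⟫_ℂ‖ ^ 2 :=
  schwarz_proj_complex_general z d c
end
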